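/- arXiv:1401.0430 — 3 statements merged into one kernel-verified Lean document; each statement's English description precedes it below -/
import Mathlib

section
/- Let R be an (v+w)×(v+w) Hermitian positive definite matrix partitioned into blocks R11, R12, R21, R22, let H1d (N_R × v) and H2d (N_R × w) be complex matrices, and let R̂ be the block matrix with blocks R̂11 = R11 + (1/N_R) H1d^H H1d, R̂12 = R12 + (1/N_R) H1d^H H2d, R̂21 = R̂12^H, R̂22 = R22 + (1/N_R) H2d^H H2d. Then the Schur complement of R̂22 in R̂ equals the Schur complement of R22 in R if and only if H1d = H2d R22^{-1} R21. -/
open Matrix ComplexOrder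

/-!
Put `X = R22⁻¹ R21`, so that `R12 = Xᴴ R22`, and write `H1d / √N_R = E + K X` with
`K = H2d / √N_R`. Expanding, the perturbed Schur complement is the old one plus
`Eᴴ (1 - K (R22 + Kᴴ K)⁻¹ Kᴴ) E`. By the Woodbury identity the middle factor is
`(1 + K R22⁻¹ Kᴴ)⁻¹`, which is positive definite, so the extra term vanishes iff `E = 0`.
-/

namespace Matrix

variable {m n p 𝕜 : Type*} [Fintype p]

theorem conjTranspose_smul_mul_smul [CommRing 𝕜] [StarRing 𝕜] (a : 𝕜) (P : Matrix p m 𝕜)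
    (Q : Matrix p n 𝕜) : (a • P)ᴴ * (a • Q) = (star a * a) • (Pᴴ * Q) := by
  rw [conjTranspose_smul, Matrix.smul_mul, Matrix.mul_smul, smul_smul]

theorem PosDef.conjTranspose_mul_mul_same_eq_zero_iff [RCLike 𝕜] [Fintype m] {P : Matrix p p 𝕜}
    (hP : P.PosDef) (E : Matrix p m 𝕜) : Eᴴ * P * E = 0 ↔ E = 0 := by
  refine ⟨fun h => ext_iff_mulVec.mpr fun v => ?_, fun h => by simp [h]⟩
  have hquad : star (E *ᵥ v) ⬝ᵥ (P *ᵥ (E *ᵥ v)) = 0 := by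
    rw [star_mulVec, ← dotProduct_mulVec, mulVec_mulVec, mulVec_mulVec, h, zero_mulVec,
      dotProduct_zero]
  by_contra hv
  exact (hP.dotProduct_mulVec_pos (by simpa using hv)).ne' hquad

variable [Fintype n] [DecidableEq n] [DecidableEq p]

/-- The Schur complement of `D` in `fromBlocks A B Bᴴ D`. -/
noncomputable def schurCompl₂₂ [CommRing 𝕜] [StarRing 𝕜] (A : Matrix m m 𝕜) (B : Matrix m n 𝕜)
    (D : Matrix n n 𝕜) : Matrix m m 𝕜 :=
  A - B * D⁻¹ * Bᴴ

theorem schurCompl₂₂_add_gram [CommRing 𝕜] [StarRing 𝕜] {D : Matrix n n 𝕜}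
    (hD : D.IsHermitian) (K : Matrix p n 𝕜) (hDK : IsUnit (D + Kᴴ * K).det)
    (A : Matrix m m 𝕜) (X : Matrix n m 𝕜) (E : Matrix p m 𝕜) :
    schurCompl₂₂ (A + (E + K * X)ᴴ * (E + K * X)) (Xᴴ * D + (E + K * X)ᴴ * K) (D + Kᴴ * K)
      = A - Xᴴ * D * X + Eᴴ * (1 - K * (D + Kᴴ * K)⁻¹ * Kᴴ) * E := by
  set Z := D + Kᴴ * K with hZ
  have hZh : Zᴴ = Z := (hD.add (isHermitian_conjTranspose_mul_self K)).eq
  have hB : Xᴴ * D + (E + K * X)ᴴ * K = Xᴴ * Z + Eᴴ * K := by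
    simp only [hZ, conjTranspose_add, conjTranspose_mul, Matrix.mul_add, Matrix.add_mul,
      Matrix.mul_assoc]
    abel
  have hBh : (Xᴴ * Z + Eᴴ * K)ᴴ = Z * X + Kᴴ * E := by
    simp [conjTranspose_add, conjTranspose_mul, hZh]
  rw [schurCompl₂₂, hB, hBh]
  clear_value Z
  simp only [Matrix.mul_add, Matrix.add_mul, Matrix.mul_sub, Matrix.sub_mul, Matrix.mul_assoc,
    mul_nonsing_inv_cancel_left (h := hDK), nonsing_inv_mul_cancel_left (h := hDK),
    conjTranspose_add, conjTranspose_mul, Matrix.mul_one]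
  subst hZ
  simp only [Matrix.mul_add, Matrix.add_mul, Matrix.mul_assoc]
  abel

variable [RCLike 𝕜]

theorem PosDef.one_sub_mul_inv_add_gram_mul_conjTranspose {D : Matrix n n 𝕜} (hD : D.PosDef)
    (K : Matrix p n 𝕜) : (1 - K * (D + Kᴴ * K)⁻¹ * Kᴴ).PosDef := by
  have hDinv : D⁻¹⁻¹ = D := nonsing_inv_nonsing_inv _ ((isUnit_iff_isUnit_det _).mp hD.isUnit)
  have hwoodbury := add_mul_mul_inv_eq_sub 1 K D⁻¹ Kᴴ isUnit_one hD.inv.isUnit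
    (by simpa [hDinv] using (hD.add_posSemidef (posSemidef_conjTranspose_mul_self K)).isUnit)
  simp only [hDinv, inv_one, Matrix.one_mul, Matrix.mul_one] at hwoodbury
  rw [← hwoodbury]
  exact (PosDef.one.add_posSemidef (hD.inv.posSemidef.mul_mul_conjTranspose_same K)).inv

theorem schurCompl₂₂_add_gram_eq_iff [Fintype m] {D : Matrix n n 𝕜} (hD : D.PosDef)
    (A : Matrix m m 𝕜) (B : Matrix m n 𝕜) (F : Matrix p m 𝕜) (K : Matrix p n 𝕜) :
    schurCompl₂₂ (A + Fᴴ * F) (B + Fᴴ * K) (D + Kᴴ * K) = schurCompl₂₂ A B D ↔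
      F = K * D⁻¹ * Bᴴ := by
  have hDdet : IsUnit D.det := (isUnit_iff_isUnit_det _).mp hD.isUnit
  obtain ⟨X, rfl⟩ : ∃ X, B = Xᴴ * D :=
    ⟨D⁻¹ * Bᴴ, by rw [conjTranspose_mul, conjTranspose_conjTranspose, hD.1.inv.eq,
      Matrix.mul_assoc, nonsing_inv_mul _ hDdet, Matrix.mul_one]⟩
  obtain ⟨E, rfl⟩ : ∃ E, F = E + K * X := ⟨F - K * X, (sub_add_cancel F _).symm⟩
  have hX : D⁻¹ * (Xᴴ * D)ᴴ = X := by
    rw [conjTranspose_mul, hD.1.eq, conjTranspose_conjTranspose,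
      nonsing_inv_mul_cancel_left _ _ hDdet]
  have hDK : IsUnit (D + Kᴴ * K).det := (isUnit_iff_isUnit_det _).mp
    (hD.add_posSemidef (posSemidef_conjTranspose_mul_self K)).isUnit
  rw [schurCompl₂₂_add_gram hD.1 K hDK, schurCompl₂₂, Matrix.mul_assoc _ D⁻¹, hX, add_eq_left,
    (hD.one_sub_mul_inv_add_gram_mul_conjTranspose K).conjTranspose_mul_mul_same_eq_zero_iff,
    Matrix.mul_assoc K, hX, add_eq_right]

end Matrix

/-- Theorem 2: the Schur complement of `R̂22` in `R̂`, where
`R̂ij = Rij + (1/N_R) Hidᴴ Hjd`, equals the Schur complement of `R22` in `R`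
if and only if `H1d = H2d R22⁻¹ R21`. -/
theorem schur_complement_preserved_iff {NR v w : ℕ} (hNR : 0 < NR)
    (R11 : Matrix (Fin v) (Fin v) ℂ) (R12 : Matrix (Fin v) (Fin w) ℂ)
    (R21 : Matrix (Fin w) (Fin v) ℂ) (R22 : Matrix (Fin w) (Fin w) ℂ)
    (hPD : (Matrix.fromBlocks R11 R12 R21 R22).PosDef)
    (H1d : Matrix (Fin NR) (Fin v) ℂ) (H2d : Matrix (Fin NR) (Fin w) ℂ) :
    ((R11 + ((NR : ℂ))⁻¹ • (H1dᴴ * H1d)) -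
        (R12 + ((NR : ℂ))⁻¹ • (H1dᴴ * H2d)) *
          (R22 + ((NR : ℂ))⁻¹ • (H2dᴴ * H2d))⁻¹ *
            (R12 + ((NR : ℂ))⁻¹ • (H1dᴴ * H2d))ᴴ =
      R11 - R12 * R22⁻¹ * R21) ↔ H1d = H2d * R22⁻¹ * R21 := by
  obtain ⟨-, hR21, -, -⟩ := isHermitian_fromBlocks_iff.mp hPD.1
  subst hR21
  have hR22 : R22.PosDef := hPD.submatrix Sum.inr_injective
  set d : ℂ := ((√(NR : ℝ)⁻¹ : ℝ) : ℂ) with hd_def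
  have hd : d ≠ 0 := by simp [hd_def, hNR.ne']
  have hdd : star d * d = (NR : ℂ)⁻¹ := by
    rw [hd_def, Complex.star_def, Complex.conj_ofReal, ← Complex.ofReal_mul,
      Real.mul_self_sqrt (by positivity), Complex.ofReal_inv, Complex.ofReal_natCast]
  simp only [← hdd, ← conjTranspose_smul_mul_smul]
  have key := schurCompl₂₂_add_gram_eq_iff hR22 R11 R12 (d • H1d) (d • H2d)
  rw [schurCompl₂₂, schurCompl₂₂] at key
  rw [key, Matrix.smul_mul, Matrix.smul_mul, smul_right_inj hd]
end

section
/- Let R be Hermitian positive definite partitioned with R22 invertible, H1d and H2d complex matrices, and define M = H1d − H2d R22^{-1} R21 and R̂ with blocks R̂ij = Rij + (1/N_R)(H_d^H H_d)ij as above. If M = 0 then for each i in 1..v, the (i,i) entry of the inverse of the Schur complement of R̂22 in R̂ equals the (i,i) entry of R^{-1} restricted to the top-left v × v block, i.e., [R̂-Schur-complement applied]: [(Schur(R̂))^{-1}]_{ii} = [R^{-1}]_{ii}. -/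
/-!
Put `K = R22⁻¹ R21`, so that `R12 = Kᴴ R22`, and `S = N_R⁻¹ H2dᴴ H2d`. The hypothesis `M = 0`
says `H1d = H2d K`, so `R̂` has blocks `R11 + Kᴴ S K`, `Kᴴ (R22 + S)`, `(R22 + S) K`, `R22 + S`,
and its Schur complement is `R11 + Kᴴ S K - Kᴴ (R22 + S) K = R11 - Kᴴ R22 K`, the Schur
complement of `R22` in `R`. The inverse of the latter is the top-left block of `R⁻¹`.
-/

open Matrix ComplexOrder

namespace Matrix

variable {m n p α : Type*} [Fintype n] [DecidableEq n]

theorem toBlocks₁₁_inv_fromBlocks [Fintype m] [DecidableEq m] [CommRing α] {A : Matrix m m α}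
    {B : Matrix m n α} {C : Matrix n m α} {D : Matrix n n α} (hD : IsUnit D)
    (h : IsUnit (fromBlocks A B C D)) :
    (fromBlocks A B C D)⁻¹.toBlocks₁₁ = (A - B * D⁻¹ * C)⁻¹ := by
  let := hD.invertible
  let := h.invertible
  let := invertibleOfFromBlocks₂₂Invertible A B C D
  rw [← invOf_eq_nonsing_inv, invOf_fromBlocks₂₂_eq, toBlocks_fromBlocks₁₁,
    invOf_eq_nonsing_inv, invOf_eq_nonsing_inv]

theorem add_mul_mul_sub_mul_inv_mul_eq [CommRing α] (A : Matrix m m α) (L : Matrix m n α)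
    (K : Matrix n m α) (D S : Matrix n n α) (h : IsUnit (D + S)) :
    A + L * S * K - L * (D + S) * (D + S)⁻¹ * ((D + S) * K) = A - L * D * K := by
  rw [Matrix.mul_assoc (L * (D + S)),
    nonsing_inv_mul_cancel_left _ _ ((isUnit_iff_isUnit_det _).mp h),
    Matrix.mul_add, Matrix.add_mul]
  abel

theorem schur_complement_add_smul_conjTranspose_mul_eq [Fintype p] [CommRing α] [StarRing α]
    (A : Matrix m m α) (B : Matrix m n α) {D : Matrix n n α} (hD : D.IsHermitian)
    (hDu : IsUnit D) {c : α} (hc : IsSelfAdjoint c) {H₁ : Matrix p m α} {H₂ : Matrix p n α}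
    (hDS : IsUnit (D + c • (H₂ᴴ * H₂))) (hH : H₁ = H₂ * D⁻¹ * Bᴴ) :
    A + c • (H₁ᴴ * H₁) - (B + c • (H₁ᴴ * H₂)) * (D + c • (H₂ᴴ * H₂))⁻¹ *
        (B + c • (H₁ᴴ * H₂))ᴴ = A - B * D⁻¹ * Bᴴ := by
  set K := D⁻¹ * Bᴴ
  set S := c • (H₂ᴴ * H₂)
  have hH₁ : H₁ = H₂ * K := by rw [hH, Matrix.mul_assoc]
  have hK : Kᴴ = B * D⁻¹ := by
    rw [conjTranspose_mul, conjTranspose_conjTranspose, hD.inv.eq]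
  have hB : B + c • (H₁ᴴ * H₂) = Kᴴ * (D + S) := by
    rw [Matrix.mul_add, hK, nonsing_inv_mul_cancel_right _ _ ((isUnit_iff_isUnit_det _).mp hDu),
      ← hK, hH₁, conjTranspose_mul, Matrix.mul_smul, Matrix.mul_assoc]
  have hDS_herm : (D + S)ᴴ = D + S := by
    rw [conjTranspose_add, hD.eq, conjTranspose_smul, hc.star_eq, conjTranspose_mul,
      conjTranspose_conjTranspose]
  have hA : c • (H₁ᴴ * H₁) = Kᴴ * S * K := by
    rw [hH₁, Matrix.mul_smul, Matrix.smul_mul, conjTranspose_mul]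
    simp only [Matrix.mul_assoc]
  have hBD : B * D⁻¹ * Bᴴ = Kᴴ * D * K := by
    rw [hK, Matrix.mul_assoc, nonsing_inv_mul_cancel_right _ _ ((isUnit_iff_isUnit_det _).mp hDu)]
  have hBH : (B + c • (H₁ᴴ * H₂))ᴴ = (D + S) * K := by
    rw [hB, conjTranspose_mul, hDS_herm, conjTranspose_conjTranspose]
  rw [hA, hBH, hB, hBD]
  exact add_mul_mul_sub_mul_inv_mul_eq A Kᴴ K D S hDS

end Matrix

theorem schur_inv_diag_eq_inv_diag_of_M_zero_general {NR v w : ℕ}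
    (R11 : Matrix (Fin v) (Fin v) ℂ) (R12 : Matrix (Fin v) (Fin w) ℂ)
    (R21 : Matrix (Fin w) (Fin v) ℂ) (R22 : Matrix (Fin w) (Fin w) ℂ)
    (hPD : (Matrix.fromBlocks R11 R12 R21 R22).PosDef)
    (H1d : Matrix (Fin NR) (Fin v) ℂ) (H2d : Matrix (Fin NR) (Fin w) ℂ)
    (hM : H1d - H2d * R22⁻¹ * R21 = 0) :
    ∀ i : Fin v,
      (((R11 + ((NR : ℂ))⁻¹ • (H1dᴴ * H1d)) -
          (R12 + ((NR : ℂ))⁻¹ • (H1dᴴ * H2d)) *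
            (R22 + ((NR : ℂ))⁻¹ • (H2dᴴ * H2d))⁻¹ *
              (R12 + ((NR : ℂ))⁻¹ • (H1dᴴ * H2d))ᴴ)⁻¹) i i =
        (Matrix.fromBlocks R11 R12 R21 R22)⁻¹ (Sum.inl i) (Sum.inl i) := by
  intro i
  obtain ⟨-, hR21, -, hR22⟩ := isHermitian_fromBlocks_iff.mp hPD.isHermitian
  have hR22pos : R22.PosDef := hPD.submatrix Sum.inr_injective
  have hc : 0 ≤ ((NR : ℂ))⁻¹ := by
    rw [← Complex.ofReal_natCast, ← Complex.ofReal_inv]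
    exact Complex.zero_le_real.mpr (by positivity)
  have hR22S : (R22 + ((NR : ℂ))⁻¹ • (H2dᴴ * H2d)).PosDef :=
    hR22pos.add_posSemidef ((posSemidef_conjTranspose_mul_self H2d).smul hc)
  rw [schur_complement_add_smul_conjTranspose_mul_eq R11 R12 hR22 hR22pos.isUnit
      (IsSelfAdjoint.of_nonneg hc) hR22S.isUnit (by rw [hR21]; exact sub_eq_zero.mp hM), hR21,
    ← toBlocks₁₁_inv_fromBlocks hR22pos.isUnit hPD.isUnit]
  rfl

/-- If `M = H1d − H2d R22⁻¹ R21 = 0`, then for each `i ≤ v` the diagonal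
entry of the inverse of the Schur complement of `R̂22` in `R̂` (where
`R̂ij = Rij + (1/N_R) Hidᴴ Hjd`) equals the corresponding diagonal entry of
the top-left block of `R⁻¹`. -/
theorem schur_inv_diag_eq_inv_diag_of_M_zero {NR v w : ℕ} (hNR : 0 < NR)
    (R11 : Matrix (Fin v) (Fin v) ℂ) (R12 : Matrix (Fin v) (Fin w) ℂ)
    (R21 : Matrix (Fin w) (Fin v) ℂ) (R22 : Matrix (Fin w) (Fin w) ℂ)
    (hPD : (Matrix.fromBlocks R11 R12 R21 R22).PosDef)
    (H1d : Matrix (Fin NR) (Fin v) ℂ) (H2d : Matrix (Fin NR) (Fin w) ℂ)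
    (hM : H1d - H2d * R22⁻¹ * R21 = 0) :
    ∀ i : Fin v,
      (((R11 + ((NR : ℂ))⁻¹ • (H1dᴴ * H1d)) -
          (R12 + ((NR : ℂ))⁻¹ • (H1dᴴ * H2d)) *
            (R22 + ((NR : ℂ))⁻¹ • (H2dᴴ * H2d))⁻¹ *
              (R12 + ((NR : ℂ))⁻¹ • (H1dᴴ * H2d))ᴴ)⁻¹) i i =
        (Matrix.fromBlocks R11 R12 R21 R22)⁻¹ (Sum.inl i) (Sum.inl i) :=
  schur_inv_diag_eq_inv_diag_of_M_zero_general R11 R12 R21 R22 hPD H1d H2d hM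
end

section
/- Let σ1 > σ2 > ... > σn be real numbers. The function (σ, λ) ↦ det(e^{σ_i λ_j}) / (∏_{i<j}(σ_i − σ_j) ∏_{i<j}(λ_i − λ_j)) is symmetric under simultaneous reordering and, for fixed distinct σ, extends continuously in λ to points where some λ_j coincide, the extension at a point with all λ_j equal to λ0 being det-derivative form: det( ∂^{b_j}/∂λ^{b_j} e^{σ_i λ} |_{λ=λ0} ) / (∏_{i<j}(σ_i − σ_j) · ∏_{j} b_j!) with b_j = n − j. -/
open Matrix

/-- Vandermonde-type product `∏_{i<j} (σ_i − σ_j)`. -/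
noncomputable def vdm {n : ℕ} (σ : Fin n → ℝ) : ℝ :=
  ∏ i : Fin n, ∏ j ∈ Finset.univ.filter (fun j => i < j), (σ i - σ j)

/-- The function `g(σ, λ) = det(e^{σ_i λ_j}) / (∏_{i<j}(σ_i−σ_j) ∏_{i<j}(λ_i−λ_j))`. -/
noncomputable def gFun {n : ℕ} (σ lam : Fin n → ℝ) : ℝ :=
  (Matrix.det (Matrix.of fun i j => Real.exp (σ i * lam j))) / (vdm σ * vdm lam)

/-!
With `f_i y = exp (σ_i y)`, the column operations replacing column `j` of `(f_i (λ_j))` by the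
divided differences `f_i[λ_0, …, λ_j]` divide its determinant by the Vandermonde determinant of
`λ`. Hence for distinct `λ`, `g(σ, λ)` is, up to the sign of the order-reversing permutation,
`det (f_i[λ_0, …, λ_j]) / ∏_{i<j} (σ_i − σ_j)`. Written in Hermite–Genocchi form the divided
differences are iterated integrals, continuous in the nodes, and at coincident nodes
`λ_0 = … = λ_j = λ₀` they equal `f_i^{(j)}(λ₀) / j! = σ_i^j e^{σ_i λ₀} / j!`; reversing the columns
gives the stated limit. A simultaneous permutation leaves the determinant unchanged and
multiplies both Vandermonde products by its sign.
-/

open Finset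

lemma Int.cast_units_mul_self {R : Type*} [Ring R] (u : ℤˣ) : ((u : ℤ) : R) * u = 1 := by
  rw [← Int.cast_mul, ← Units.val_mul, Int.units_mul_self, Units.val_one, Int.cast_one]

section Vandermonde

variable {n : ℕ}

theorem vdm_eq_prod_Ioi (v : Fin n → ℝ) : vdm v = ∏ i, ∏ j ∈ Ioi i, (v i - v j) := by
  simp only [vdm, filter_lt_eq_Ioi]

theorem vdm_comp_perm (v : Fin n → ℝ) (e : Equiv.Perm (Fin n)) :
    vdm (v ∘ e) = e.sign * vdm v := by
  simp only [vdm_eq_prod_Ioi, Function.comp_apply]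
  exact e.prod_Ioi_comp_eq_sign_mul_prod (f := fun i j => v i - v j) fun i j => (neg_sub _ _).symm

theorem vdm_eq_sign_revPerm_mul_det_vandermonde (v : Fin n → ℝ) :
    vdm v = (Fin.revPerm : Equiv.Perm (Fin n)).sign * (vandermonde v).det := by
  rw [← det_permute', vdm_eq_prod_Ioi]
  have h := det_projVandermonde 1 v
  simp only [Pi.one_apply, one_mul] at h
  rw [← h]
  congr 1
  ext i j
  simp [projVandermonde, rectVandermonde, vandermonde]

theorem gFun_comp_perm (σ lam : Fin n → ℝ) (e : Equiv.Perm (Fin n)) :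
    gFun (σ ∘ e) (lam ∘ e) = gFun σ lam := by
  have hexp : (of fun i j => Real.exp ((σ ∘ e) i * (lam ∘ e) j))
      = (of fun i j => Real.exp (σ i * lam j)).submatrix e e := rfl
  unfold gFun
  rw [vdm_comp_perm, vdm_comp_perm, hexp, det_submatrix_equiv_self]
  congr 1
  linear_combination (vdm σ * vdm lam) * Int.cast_units_mul_self (R := ℝ) e.sign

end Vandermonde

lemma sum_inv_prod_erase_sub_eq_zero {F ι : Type*} [Field F] [DecidableEq ι] {s : Finset ι}
    {v : ι → F} (hvs : Set.InjOn v s) (hs : 2 ≤ #s) :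
    ∑ i ∈ s, (∏ j ∈ s.erase i, (v i - v j))⁻¹ = 0 := by
  have h := Lagrange.coeff_eq_sum hvs (P := 1) (by simpa using card_pos.mp (by omega))
  simp only [Polynomial.eval_one, Polynomial.coeff_one, one_div] at h
  rw [← h, if_neg (by omega)]

lemma mul_integral_exp_mul_add_mul (s a d : ℝ) (hd : d ≠ 0) :
    s * ∫ u in (0 : ℝ)..1, Real.exp (s * (a + u * d))
      = (Real.exp (s * (a + d)) - Real.exp (s * a)) / d := by
  rcases eq_or_ne s 0 with rfl | hs
  · simp
  have h := intervalIntegral.integral_comp_mul_add (a := 0) (b := 1) Real.exp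
    (mul_ne_zero hs hd) (s * a)
  simp only [integral_exp, mul_zero, zero_add, mul_one, smul_eq_mul] at h
  rw [show (fun u => Real.exp (s * (a + u * d))) = fun u => Real.exp (s * d * u + s * a) by
    ext u; ring_nf, h]
  field_simp
  ring_nf

-- The divided difference of `y ↦ exp (s * y)` at the nodes `x`, in Hermite–Genocchi
-- (iterated integral) form, which stays meaningful and continuous when nodes coincide.
noncomputable def expDividedDiff : (k : ℕ) → ℝ → (Fin (k + 1) → ℝ) → ℝ
  | 0, s, x => Real.exp (s * x 0)
  | k + 1, s, x =>
      s * ∫ u in (0 : ℝ)..1, Real.exp (s * ((1 - u) * x 0)) * expDividedDiff k (u * s) (Fin.tail x)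

theorem continuous_expDividedDiff (k : ℕ) :
    Continuous fun p : ℝ × (Fin (k + 1) → ℝ) => expDividedDiff k p.1 p.2 := by
  induction k with
  | zero => simp only [expDividedDiff]; fun_prop
  | succ k ih =>
    simp only [expDividedDiff]
    have htail : Continuous fun q : (ℝ × (Fin (k + 2) → ℝ)) × ℝ =>
        expDividedDiff k (q.2 * q.1.1) (Fin.tail q.1.2) :=
      ih.comp (f := fun q : (ℝ × (Fin (k + 2) → ℝ)) × ℝ => (q.2 * q.1.1, Fin.tail q.1.2))
        (by unfold Fin.tail; fun_prop)
    have hint : Continuous fun q : (ℝ × (Fin (k + 2) → ℝ)) × ℝ =>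
        Real.exp (q.1.1 * ((1 - q.2) * q.1.2 0)) *
          expDividedDiff k (q.2 * q.1.1) (Fin.tail q.1.2) := by
      fun_prop
    exact continuous_fst.mul
      (intervalIntegral.continuous_parametric_intervalIntegral_of_continuous' hint 0 1)

theorem expDividedDiff_const (k : ℕ) (s c : ℝ) :
    expDividedDiff k s (fun _ => c) = s ^ k * Real.exp (s * c) / k.factorial := by
  induction k generalizing s with
  | zero => simp [expDividedDiff]
  | succ k ih =>
    have hintegrand (u : ℝ) : Real.exp (s * ((1 - u) * c)) * expDividedDiff k (u * s) (fun _ => c)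
        = u ^ k * (s ^ k * Real.exp (s * c) / k.factorial) := by
      rw [ih, mul_pow, mul_div_assoc', mul_left_comm, ← Real.exp_add]
      ring_nf
    have htail : Fin.tail (fun _ : Fin (k + 2) => c) = fun _ => c := rfl
    simp only [expDividedDiff, htail, hintegrand, intervalIntegral.integral_mul_const, integral_pow,
      Nat.factorial_succ]
    push_cast
    field_simp
    ring

lemma prod_erase_succ_sub {k : ℕ} (x : Fin (k + 2) → ℝ) (r : Fin (k + 1)) :
    ∏ l ∈ univ.erase r.succ, (x r.succ - x l)
      = (x r.succ - x 0) * ∏ l ∈ univ.erase r, (Fin.tail x r - Fin.tail x l) := by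
  simp only [← filter_ne', prod_filter, Fin.prod_univ_succ, Fin.tail, ne_eq, Fin.succ_inj,
    (Fin.succ_ne_zero r).symm, not_false_eq_true, if_true]

theorem expDividedDiff_eq_sum (k : ℕ) (s : ℝ) {x : Fin (k + 1) → ℝ} (hx : Function.Injective x) :
    expDividedDiff k s x = ∑ r, Real.exp (s * x r) / ∏ l ∈ univ.erase r, (x r - x l) := by
  induction k generalizing s with
  | zero => simp [expDividedDiff]
  | succ k ih =>
    set W : Fin (k + 2) → ℝ := fun r => ∏ l ∈ univ.erase r, (x r - x l)
    set w : Fin (k + 1) → ℝ := fun r => ∏ l ∈ univ.erase r, (Fin.tail x r - Fin.tail x l)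
    have hgap (r : Fin (k + 1)) : x r.succ - x 0 ≠ 0 := sub_ne_zero.2 (hx.ne (Fin.succ_ne_zero r))
    have hW (r : Fin (k + 1)) : W r.succ = (x r.succ - x 0) * w r := prod_erase_succ_sub x r
    have hW0 : (W 0)⁻¹ = -∑ r : Fin (k + 1), (W r.succ)⁻¹ := by
      have := sum_inv_prod_erase_sub_eq_zero (s := univ) hx.injOn (by simp)
      rw [Fin.sum_univ_succ] at this
      linarith
    have hintegrand (u : ℝ) :
        Real.exp (s * ((1 - u) * x 0)) * expDividedDiff k (u * s) (Fin.tail x)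
          = ∑ r, Real.exp (s * (x 0 + u * (x r.succ - x 0))) / w r := by
      rw [ih (u * s) (x := Fin.tail x) (hx.comp (Fin.succ_injective _)), mul_sum]
      refine sum_congr rfl fun r _ => ?_
      rw [mul_div_assoc', ← Real.exp_add]
      congr 2
      simp only [Fin.tail]
      ring
    have hterm (r : Fin (k + 1)) :
        s * ∫ u in (0 : ℝ)..1, Real.exp (s * (x 0 + u * (x r.succ - x 0))) / w r
          = Real.exp (s * x r.succ) / W r.succ - Real.exp (s * x 0) * (W r.succ)⁻¹ := by
      rw [intervalIntegral.integral_div, mul_div_assoc',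
        mul_integral_exp_mul_add_mul _ _ _ (hgap r), hW, div_div, add_sub_cancel]
      ring
    rw [expDividedDiff]
    simp only [hintegrand]
    rw [intervalIntegral.integral_finsetSum
      fun r _ => (by fun_prop : Continuous _).intervalIntegrable _ _, mul_sum]
    change _ = ∑ r, Real.exp (s * x r) / W r
    rw [Fin.sum_univ_succ (f := fun r => Real.exp (s * x r) / W r), div_eq_mul_inv _ (W 0), hW0]
    simp only [hterm, sum_sub_distrib, ← mul_sum]
    ring

section DividedDifferenceMatrix

variable {n : ℕ}

lemma map_castLEEmb_univ_eq_Iic (j : Fin n) :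
    (univ : Finset (Fin (j + 1))).map (Fin.castLEEmb j.isLt) = Iic j := by
  ext l
  simp only [mem_map, mem_univ, true_and, Fin.coe_castLEEmb, mem_Iic]
  exact ⟨fun ⟨a, ha⟩ => ha ▸ Fin.le_iff_val_le_val.2 (Nat.lt_succ_iff.1 a.isLt),
    fun h => ⟨⟨l, Nat.lt_succ_iff.2 h⟩, rfl⟩⟩

noncomputable def expDividedDiffMatrix (σ lam : Fin n → ℝ) : Matrix (Fin n) (Fin n) ℝ :=
  of fun i j => expDividedDiff j (σ i) (fun l => lam (Fin.castLE j.isLt l))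

-- For injective `lam`, right multiplication by this matrix replaces column `j` of `(f_i (lam r))`
-- by the divided differences `f_i[lam 0, …, lam j]`.
noncomputable def dividedDiffCoeff (lam : Fin n → ℝ) : Matrix (Fin n) (Fin n) ℝ :=
  of fun r j => if r ≤ j then (∏ l ∈ (Iic j).erase r, (lam r - lam l))⁻¹ else 0

theorem det_dividedDiffCoeff (lam : Fin n → ℝ) :
    (dividedDiffCoeff lam).det = (vandermonde lam).det⁻¹ := by
  have htri : (dividedDiffCoeff lam).IsUpperTriangular := fun r j (hjr : j < r) => by
    simp [dividedDiffCoeff, not_le.2 hjr]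
  rw [det_of_isUpperTriangular htri, det_vandermonde, ← prod_inv_distrib]
  simp only [dividedDiffCoeff, of_apply, le_refl, if_true, Iic_erase]
  rw [prod_inv_distrib, prod_inv_distrib]
  exact congrArg _ (prod_comm' (by simp))

theorem exp_mul_dividedDiffCoeff (σ lam : Fin n → ℝ) (hlam : Function.Injective lam) :
    (of fun i j => Real.exp (σ i * lam j)) * dividedDiffCoeff lam = expDividedDiffMatrix σ lam := by
  ext i j
  rw [mul_apply, expDividedDiffMatrix, of_apply, expDividedDiff_eq_sum _ _
    (x := fun l => lam (Fin.castLE j.isLt l)) (hlam.comp (Fin.castLE_injective _))]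
  simp only [dividedDiffCoeff, of_apply, mul_ite, mul_zero, ← sum_filter, ← div_eq_mul_inv]
  rw [filter_ge_eq_Iic, ← map_castLEEmb_univ_eq_Iic, sum_map]
  refine sum_congr rfl fun r _ => ?_
  rw [← map_erase, prod_map]
  rfl

end DividedDifferenceMatrix

section Limit

variable {n : ℕ}

theorem continuous_det_expDividedDiffMatrix (σ : Fin n → ℝ) :
    Continuous fun lam : Fin n → ℝ => (expDividedDiffMatrix σ lam).det :=
  Continuous.matrix_det <| continuous_matrix fun i j =>
    (continuous_expDividedDiff j).comp (continuous_const.prodMk (by fun_prop))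

theorem expDividedDiffMatrix_const (σ : Fin n → ℝ) (c : ℝ) :
    expDividedDiffMatrix σ (fun _ => c)
      = of fun i (j : Fin n) => σ i ^ (j : ℕ) * Real.exp (σ i * c) / (j : ℕ).factorial := by
  ext i j
  exact expDividedDiff_const _ _ _

theorem gFun_eq_det_expDividedDiffMatrix (σ lam : Fin n → ℝ) (hlam : Function.Injective lam) :
    gFun σ lam = (expDividedDiffMatrix σ lam).det
      / ((Fin.revPerm : Equiv.Perm (Fin n)).sign * vdm σ) := by
  have hV : (vandermonde lam).det ≠ 0 := det_vandermonde_ne_zero_iff.2 hlam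
  have hdet : (of fun i j => Real.exp (σ i * lam j)).det
      = (expDividedDiffMatrix σ lam).det * (vandermonde lam).det := by
    rw [← exp_mul_dividedDiffCoeff σ lam hlam, det_mul, det_dividedDiffCoeff,
      inv_mul_cancel_right₀ hV]
  rw [gFun, hdet, vdm_eq_sign_revPerm_mul_det_vandermonde lam, mul_left_comm,
    ← mul_assoc, mul_div_mul_right _ _ hV]

theorem det_pow_mul_exp_div_eq_det_expDividedDiffMatrix_const (σ : Fin n → ℝ) (c : ℝ) :
    (of fun i j : Fin n => σ i ^ (n - 1 - (j : ℕ)) * Real.exp (σ i * c)).det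
        / (vdm σ * ∏ j : Fin n, ((n - 1 - (j : ℕ)).factorial : ℝ))
      = (expDividedDiffMatrix σ (fun _ => c)).det
        / ((Fin.revPerm : Equiv.Perm (Fin n)).sign * vdm σ) := by
  set ε : ℝ := (((Fin.revPerm : Equiv.Perm (Fin n)).sign : ℤ) : ℝ)
  have hε : ε⁻¹ = ε := inv_eq_of_mul_eq_one_right (Int.cast_units_mul_self _)
  have hfact : ∏ j : Fin n, ((n - 1 - (j : ℕ)).factorial : ℝ) ≠ 0 :=
    prod_ne_zero_iff.2 fun j _ => Nat.cast_ne_zero.2 (Nat.factorial_ne_zero _)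
  have hcols : (of fun i j : Fin n => σ i ^ (n - 1 - (j : ℕ)) * Real.exp (σ i * c))
      = of fun i (j : Fin n) => ((n - 1 - (j : ℕ)).factorial : ℝ)
          * (expDividedDiffMatrix σ (fun _ => c)).submatrix id Fin.revPerm i j := by
    ext i j
    have hrev : (Fin.rev j : ℕ) = n - 1 - j := by rw [Fin.val_rev]; omega
    simp only [expDividedDiffMatrix_const, of_apply, submatrix_apply, id, Fin.revPerm_apply, hrev]
    field_simp
  rw [hcols, det_mul_row, det_permute', mul_comm (vdm σ), mul_div_mul_left _ _ hfact,
    div_eq_mul_inv _ (ε * vdm σ), mul_inv, hε]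
  ring

end Limit

theorem gFun_symm_and_tendsto_general {n : ℕ} (σ : Fin n → ℝ)
    (lam0 : ℝ) :
    (∀ (e : Equiv.Perm (Fin n)) (lam : Fin n → ℝ),
        gFun (σ ∘ e) (lam ∘ e) = gFun σ lam) ∧
    Filter.Tendsto (fun lam : Fin n → ℝ => gFun σ lam)
      (nhdsWithin (fun _ => lam0) {lam | Function.Injective lam})
      (nhds ((Matrix.det (Matrix.of fun i j : Fin n =>
          σ i ^ (n - 1 - (j : ℕ)) * Real.exp (σ i * lam0))) /
        (vdm σ * ∏ j : Fin n, (Nat.factorial (n - 1 - (j : ℕ)) : ℝ)))) := by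
  refine ⟨fun e lam => gFun_comp_perm σ lam e, ?_⟩
  rw [det_pow_mul_exp_div_eq_det_expDividedDiffMatrix_const]
  have hcont := ((continuous_det_expDividedDiffMatrix σ).div_const
    ((Fin.revPerm : Equiv.Perm (Fin n)).sign * vdm σ)).tendsto (fun _ => lam0)
  refine (hcont.mono_left nhdsWithin_le_nhds).congr' ?_
  filter_upwards [self_mem_nhdsWithin] with lam hlam
  exact (gFun_eq_det_expDividedDiffMatrix σ lam hlam).symm

/-- `g` is symmetric under simultaneous reordering of `σ` and `λ`, and for
fixed distinct (strictly decreasing) `σ` it extends continuously in `λ` to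
coalescing points; at a point with all `λ_j = λ0` the extension is
`det(∂^{b_j}/∂λ^{b_j} e^{σ_i λ}|_{λ0}) / (∏_{i<j}(σ_i−σ_j) ∏_j b_j!)` with
`b_j = n − j`, i.e. `det(σ_i^{n−j} e^{σ_i λ0}) / (∏_{i<j}(σ_i−σ_j) ∏_j (n−j)!)`. -/
theorem gFun_symm_and_tendsto {n : ℕ} (σ : Fin n → ℝ) (hσ : StrictAnti σ)
    (lam0 : ℝ) :
    (∀ (e : Equiv.Perm (Fin n)) (lam : Fin n → ℝ),
        gFun (σ ∘ e) (lam ∘ e) = gFun σ lam) ∧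
    Filter.Tendsto (fun lam : Fin n → ℝ => gFun σ lam)
      (nhdsWithin (fun _ => lam0) {lam | Function.Injective lam})
      (nhds ((Matrix.det (Matrix.of fun i j : Fin n =>
          σ i ^ (n - 1 - (j : ℕ)) * Real.exp (σ i * lam0))) /
        (vdm σ * ∏ j : Fin n, (Nat.factorial (n - 1 - (j : ℕ)) : ℝ)))) :=
  gFun_symm_and_tendsto_general σ lam0
end
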